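/- arXiv:2002.04552 — 7 statements merged into one kernel-verified Lean document; each statement's English description precedes it below -/
import Mathlib

section
/- Let β⁽ⁿ⁾ be defined by ρ̄ⁿ(k) = β⁽ⁿ⁾ fⁿ(k) (so β⁽ⁿ⁾ is ρ̄ⁿ(k) with its last letter removed). Then β⁽ⁿ⁾ does not depend on k, has length rⁿ − 1, and satisfies the recursion β⁽ⁿ⁺¹⁾ = β⁽ⁿ⁾ fⁿ(k₁) β⁽ⁿ⁾ fⁿ(k₂) ⋯ β⁽ⁿ⁾ fⁿ(k_{r-1}) β⁽ⁿ⁾. -/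
/-- Extension of a substitution on ℕ₀ to words by concatenation. -/
def applyN (σ : ℕ → List ℕ) (w : List ℕ) : List ℕ := w.flatMap σ

lemma applyN_append (σ : ℕ → List ℕ) (u v : List ℕ) :
    applyN σ (u ++ v) = applyN σ u ++ applyN σ v := by
  simp [applyN]

lemma applyN_iter_append (σ : ℕ → List ℕ) (n : ℕ) (u v : List ℕ) :
    (applyN σ)^[n] (u ++ v) = (applyN σ)^[n] u ++ (applyN σ)^[n] v := by
  induction n generalizing u v with
  | zero => simp
  | succ n ih => simp [Function.iterate_succ_apply, applyN_append, ih]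

lemma applyN_iter_flatMap (σ : ℕ → List ℕ) (n : ℕ) (w : List ℕ) :
    (applyN σ)^[n] w = w.flatMap (fun a => (applyN σ)^[n] [a]) := by
  induction w with
  | nil =>
      have : (applyN σ)^[n] ([] : List ℕ) = [] := by
        induction n with
        | zero => rfl
        | succ n ih => simp [Function.iterate_succ_apply, applyN, ih]
      simp [this]
  | cons a w ih =>
      have : (a :: w) = [a] ++ w := rfl
      rw [this, applyN_iter_append, ih]
      simp

/-- β⁽ⁿ⁾ (= ρ̄ⁿ(k) with its last letter removed) does not depend on k, has length
rⁿ − 1, and satisfies the recursion β⁽ⁿ⁺¹⁾ = β⁽ⁿ⁾ fⁿ(k₁) ⋯ β⁽ⁿ⁾ fⁿ(k_{r-1}) β⁽ⁿ⁾. -/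
theorem stmt5 (p r : ℕ) (hr : 2 ≤ r) (ks : List ℕ) (hks : ks.length = r - 1)
    (kr : ℕ) (f : ℕ → ℕ) (hf : ∀ k, f k = kr + p * k)
    (ρbar : ℕ → List ℕ) (hρbar : ∀ k, ρbar k = ks ++ [f k])
    (β : ℕ → List ℕ) (hβ : ∀ n, β n = ((applyN ρbar)^[n] [0]).dropLast) :
    (∀ (n k : ℕ), (applyN ρbar)^[n] [k] = β n ++ [f^[n] k]) ∧
    (∀ n : ℕ, (β n).length = r ^ n - 1) ∧
    (∀ n : ℕ, β (n + 1) = (ks.flatMap fun ki => β n ++ [f^[n] ki]) ++ β n) := by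
  -- main claim
  have claim1 : ∀ (n k : ℕ), (applyN ρbar)^[n] [k] = β n ++ [f^[n] k] := by
    intro n
    induction n with
    | zero => intro k; simp [hβ]
    | succ n ih =>
        have step : ∀ k, (applyN ρbar)^[n+1] [k]
            = (applyN ρbar (β n) ++ ks) ++ [f^[n+1] k] := by
          intro k
          rw [Function.iterate_succ_apply', ih k, applyN_append]
          simp [applyN, hρbar, Function.iterate_succ_apply']
        have hβs : β (n+1) = applyN ρbar (β n) ++ ks := by
          rw [hβ, step 0]
          simp
        intro k
        rw [step k, hβs]
  have hlw : ∀ w : List ℕ, (applyN ρbar w).length = r * w.length := by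
    intro w
    induction w with
    | nil => simp [applyN]
    | cons a w ih =>
        have h1 : (applyN ρbar (a :: w)).length
            = (ρbar a).length + (applyN ρbar w).length := by
          simp [applyN]
        rw [h1, ih, hρbar]
        simp [hks, Nat.mul_succ]
        omega
  have hlen : ∀ n k, ((applyN ρbar)^[n] [k]).length = r ^ n := by
    intro n
    induction n with
    | zero => intro k; simp
    | succ n ih =>
        intro k
        rw [Function.iterate_succ_apply', hlw, ih k, pow_succ]
        ring
  refine ⟨claim1, ?_, ?_⟩
  · intro n
    have := hlen n 0
    rw [claim1 n 0] at this
    simp at this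
    omega
  · intro n
    have key : (applyN ρbar)^[n+1] [0] = (ks.flatMap fun ki => β n ++ [f^[n] ki])
        ++ β n ++ [f^[n+1] 0] := by
      rw [Function.iterate_succ_apply]
      have h0 : applyN ρbar [0] = ks ++ [f 0] := by simp [applyN, hρbar]
      rw [h0, applyN_iter_append, applyN_iter_flatMap ρbar n ks, claim1 n (f 0),
        ← Function.iterate_succ_apply]
      simp only [claim1]
      simp [List.append_assoc]
    rw [hβ, key]
    simp
end

section
/- If the word k₁ k₂ ⋯ k_{r-1} is a palindrome, then for every n ≥ 1 the word β⁽ⁿ⁾ (defined by ρ̄ⁿ(k) = β⁽ⁿ⁾ fⁿ(k)) is a palindrome of length rⁿ − 1. -/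
lemma aux_rev (b : List ℕ) (h : ℕ → ℕ) :
    ∀ ks : List ℕ, b ++ ks.flatMap (fun k => h k :: b)
      = (ks.flatMap fun k => b ++ [h k]) ++ b := by
  intro ks
  induction ks with
  | nil => simp
  | cons a t ih => simp only [List.flatMap_cons, List.append_assoc] at *; simp [ih]

lemma aux_len (b : List ℕ) (h : ℕ → ℕ) :
    ∀ ks : List ℕ, (ks.flatMap fun k => b ++ [h k]).length
      = ks.length * (b.length + 1) := by
  intro ks
  induction ks with
  | nil => simp
  | cons a t ih => simp [List.flatMap_cons, ih]; ring

/-- If k₁⋯k_{r-1} is a palindrome, then every β⁽ⁿ⁾ (n ≥ 1) is a palindrome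
of length rⁿ − 1. -/
theorem stmt7 (p r : ℕ) (hr : 2 ≤ r) (ks : List ℕ) (hks : ks.length = r - 1)
    (kr : ℕ) (f : ℕ → ℕ) (hf : ∀ k, f k = kr + p * k)
    (hpal : ks.reverse = ks)
    (β : ℕ → List ℕ) (hβ1 : β 1 = ks)
    (hβs : ∀ n, 1 ≤ n →
      β (n + 1) = (ks.flatMap fun ki => β n ++ [f^[n] ki]) ++ β n) :
    ∀ n, 1 ≤ n → (β n).reverse = β n ∧ (β n).length = r ^ n - 1 := by
  intro n hn
  induction n with
  | zero => omega
  | succ m ih =>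
    rcases Nat.eq_or_lt_of_le hn with h1 | h1
    · -- m+1 = 1
      have hm : m = 0 := by omega
      subst hm
      refine ⟨by rw [hβ1]; exact hpal, by rw [hβ1, hks]; simp⟩
    · have hm : 1 ≤ m := by omega
      obtain ⟨hrev, hlen⟩ := ih hm
      rw [hβs m hm]
      constructor
      · rw [List.reverse_append, List.reverse_flatMap, hrev, hpal]
        have : ∀ k, ((β m ++ [f^[m] k]).reverse) = f^[m] k :: β m := by
          intro k; simp [hrev]
        simp only [Function.comp_def, this]
        exact aux_rev (β m) (f^[m]) ks
      · rw [List.length_append, aux_len, hks, hlen]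
        have hr1 : 1 ≤ r ^ m := Nat.one_le_pow _ _ (by omega)
        have : r ^ (m + 1) = r * r ^ m := by ring
        rw [this]
        have : r ^ m - 1 + 1 = r ^ m := by omega
        rw [this]
        have h2 : 2 ≤ r * r ^ m := le_trans hr (Nat.le_mul_of_pos_right _ (by omega))
        have h3 : r ^ m ≤ r * r ^ m := Nat.le_mul_of_pos_left _ (by omega)
        rw [Nat.sub_mul, one_mul]; omega
end

section
/- Suppose the sequence x ∈ ℕ₀^ℤ has the Toeplitz structure x = α ▶ f(x') with α = (k₁⋯k_{r-1} ?)^ℤ (i.e., x restricted to positions not congruent to −1 mod r is the r-periodic repetition of k₁⋯k_{r-1}, and the positions congruent to −1 mod r carry the letters of f(x') in order), where f is injective. If x_{[0, nrℓ−1]} = yⁿ for some word y of length rℓ, then x'_{[0,nℓ−1]} = (y')ⁿ for some word y' of length ℓ. -/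
/-- Toeplitz structure descends to powers: if x = α ▶ f(x') with skeleton
k₁⋯k_{r-1} on positions ≢ −1 (mod r) and the letters of f(x') on the positions
≡ −1 (mod r), f injective, and x_{[0,nrℓ−1]} = yⁿ with |y| = rℓ, then
x'_{[0,nℓ−1]} = (y')ⁿ for some word y' of length ℓ. -/
theorem stmt10 (r ℓ n : ℕ) (hr : 2 ≤ r) (hℓ : 1 ≤ ℓ) (hn : 1 ≤ n)
    (f : ℕ → ℕ) (hf : Function.Injective f)
    (ks : List ℕ) (hks : ks.length = r - 1)
    (x x' : ℤ → ℕ)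
    (hsk : ∀ (m : ℤ) (i : ℕ), i < r - 1 →
      x ((r : ℤ) * m + (i : ℤ)) = ks.getD i 0)
    (hfill : ∀ m : ℤ, x ((r : ℤ) * m + ((r : ℤ) - 1)) = f (x' m))
    (y : List ℕ) (hy : y.length = r * ℓ)
    (hword : ∀ i : ℕ, i < n * (r * ℓ) → x (i : ℤ) = y.getD (i % (r * ℓ)) 0) :
    ∃ y' : List ℕ, y'.length = ℓ ∧
      ∀ m : ℕ, m < n * ℓ → x' (m : ℤ) = y'.getD (m % ℓ) 0 := by
  have key : ∀ k : ℕ, k < n * ℓ → f (x' (k : ℤ)) = y.getD (r * (k % ℓ) + (r - 1)) 0 := by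
    intro k hk
    have h1 : x ((r : ℤ) * (k : ℤ) + ((r : ℤ) - 1)) = f (x' (k : ℤ)) := hfill (k : ℤ)
    have hcast : (r : ℤ) * (k : ℤ) + ((r : ℤ) - 1) = ((r * k + (r - 1) : ℕ) : ℤ) := by
      push_cast [Nat.cast_sub (by omega : 1 ≤ r)]
      ring
    have hlt : r * k + (r - 1) < n * (r * ℓ) := by
      have h2 : k + 1 ≤ n * ℓ := hk
      have h3 : r * (k + 1) ≤ r * (n * ℓ) := Nat.mul_le_mul_left r h2
      have h4 : n * (r * ℓ) = r * (n * ℓ) := by ring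
      have h5 : r * (k + 1) = r * k + r := by ring
      omega
    have h2 := hword (r * k + (r - 1)) hlt
    have hslt : k % ℓ < ℓ := Nat.mod_lt _ (by omega)
    have hmod : (r * k + (r - 1)) % (r * ℓ) = r * (k % ℓ) + (r - 1) := by
      have hk' : k = ℓ * (k / ℓ) + k % ℓ := (Nat.div_add_mod k ℓ).symm
      have heq : r * k + (r - 1) = (r * (k % ℓ) + (r - 1)) + (r * ℓ) * (k / ℓ) := by
        calc r * k + (r - 1) = r * (ℓ * (k / ℓ) + k % ℓ) + (r - 1) := by rw [← hk']
        _ = (r * (k % ℓ) + (r - 1)) + (r * ℓ) * (k / ℓ) := by ring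
      rw [heq, Nat.add_mul_mod_self_left]
      apply Nat.mod_eq_of_lt
      have h6 : r * (k % ℓ + 1) ≤ r * ℓ := Nat.mul_le_mul_left r hslt
      have h7 : r * (k % ℓ + 1) = r * (k % ℓ) + r := by ring
      omega
    rw [hcast] at h1
    rw [← h1, h2, hmod]
  refine ⟨List.ofFn (fun i : Fin ℓ => x' ((i : ℕ) : ℤ)), by simp, ?_⟩
  intro m hm
  have hmlt : m % ℓ < ℓ := Nat.mod_lt _ (by omega)
  have hm2 : m % ℓ < n * ℓ := lt_of_lt_of_le hmlt (Nat.le_mul_of_pos_left ℓ (by omega))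
  have heq : f (x' (m : ℤ)) = f (x' ((m % ℓ : ℕ) : ℤ)) := by
    rw [key m hm, key (m % ℓ) hm2, Nat.mod_eq_of_lt hmlt]
  rw [hf heq, List.getD_eq_getElem _ _ (by simpa using hmlt)]
  simp
end

section
/- Let x ∈ ℕ₀^ℤ be a sequence such that the positions in some arithmetic progression U₁ = rℤ + q form the 'level-1 undetermined' set and x restricted to ℤ∖U₁ is r-periodic. If x_{[0, nℓ−1]} = yⁿ for a word y of length ℓ with n ≥ 3, ℓ > r, and r ∤ ℓ, then x_{[0,nℓ−1]} is r-periodic; consequently x_{[0,nℓ−1]} = (y')^s for a word y' of length r and some rational s > n. -/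
/-- If x is r-periodic away from the level-1 undetermined lattice rℤ + q and
x_{[0,nℓ−1]} = yⁿ with n ≥ 3, ℓ > r, r ∤ ℓ, then x_{[0,nℓ−1]} is r-periodic;
consequently x_{[0,nℓ−1]} = (y')^s for a word y' of length r and a rational
s = nℓ/r > n. -/
theorem stmt11 (r : ℕ) (hr : 2 ≤ r) (q : ℤ) (ℓ n : ℕ)
    (hn : 3 ≤ n) (hℓr : r < ℓ) (hnd : ¬ r ∣ ℓ)
    (x : ℤ → ℕ)
    (hT : ∀ i : ℤ, i % (r : ℤ) ≠ q % (r : ℤ) → x (i + (r : ℤ)) = x i)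
    (y : List ℕ) (hy : y.length = ℓ)
    (hword : ∀ i : ℕ, i < n * ℓ → x (i : ℤ) = y.getD (i % ℓ) 0) :
    (∀ i : ℤ, 0 ≤ i → i + (r : ℤ) < (n * ℓ : ℕ) → x (i + (r : ℤ)) = x i) ∧
    ∃ (y' : List ℕ) (s : ℚ), y'.length = r ∧
      (∀ i : ℕ, i < n * ℓ → x (i : ℤ) = y'.getD (i % r) 0) ∧
      (n : ℚ) < s ∧ s = (n * ℓ : ℚ) / (r : ℚ) := by
  have hℓ0 : 0 < ℓ := by omega
  have h3ℓ : 3 * ℓ ≤ n * ℓ := Nat.mul_le_mul_right ℓ hn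
  -- integer version of hword
  have hA : ∀ j : ℤ, 0 ≤ j → j < (n * ℓ : ℕ) → x j = y.getD (j.toNat % ℓ) 0 := by
    intro j hj0 hj
    have : j = (j.toNat : ℤ) := (Int.toNat_of_nonneg hj0).symm
    rw [this]
    exact hword j.toNat (by omega)
  -- ℓ-shift inside the window
  have hB : ∀ j : ℤ, 0 ≤ j → j + (ℓ : ℤ) < (n * ℓ : ℕ) → x (j + (ℓ : ℤ)) = x j := by
    intro j hj0 hj
    rw [hA j hj0 (by omega), hA (j + (ℓ : ℤ)) (by omega) hj]
    have h1 : (j + (ℓ : ℤ)).toNat = j.toNat + ℓ := by omega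
    rw [h1, Nat.add_mod_right]
  -- two positions congruent to q mod r differ by a multiple of r
  have hdiff : ∀ a b : ℤ, a % (r : ℤ) = q % (r : ℤ) → b % (r : ℤ) = q % (r : ℤ) →
      (r : ℤ) ∣ (b - a) := by
    intro a b ha hb
    exact Int.ModEq.dvd (ha.trans hb.symm)
  have hndZ : ¬ ((r : ℤ) ∣ (ℓ : ℤ)) := fun h => hnd (Int.natCast_dvd_natCast.mp h)
  have part1 : ∀ i : ℤ, 0 ≤ i → i + (r : ℤ) < (n * ℓ : ℕ) → x (i + (r : ℤ)) = x i := by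
    intro i hi0 hir
    by_cases h : i % (r : ℤ) = q % (r : ℤ)
    · -- shift by ±ℓ to a determined position
      by_cases h2 : i + (ℓ : ℤ) + (r : ℤ) < (n * ℓ : ℕ)
      · have hjne : (i + (ℓ : ℤ)) % (r : ℤ) ≠ q % (r : ℤ) := by
          intro hc
          apply hndZ
          have := hdiff i (i + (ℓ : ℤ)) h hc
          simpa using this
        rw [← hB (i + (r : ℤ)) (by omega) (by omega),
          show i + (r : ℤ) + (ℓ : ℤ) = (i + (ℓ : ℤ)) + (r : ℤ) from by ring,
          hT _ hjne, hB _ (by omega) (by omega)]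
      · have hiℓ : (ℓ : ℤ) ≤ i := by omega
        have hjne : (i - (ℓ : ℤ)) % (r : ℤ) ≠ q % (r : ℤ) := by
          intro hc
          apply hndZ
          have := hdiff i (i - (ℓ : ℤ)) h hc
          have h' : (r : ℤ) ∣ -(ℓ : ℤ) := by simpa [sub_sub_cancel_left] using this
          exact (dvd_neg.mp h')
        rw [show i + (r : ℤ) = (i - (ℓ : ℤ) + (r : ℤ)) + (ℓ : ℤ) from by ring,
          hB _ (by omega) (by omega), hT _ hjne]
        have h3 : x ((i - (ℓ : ℤ)) + (ℓ : ℤ)) = x (i - (ℓ : ℤ)) :=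
          hB _ (by omega) (by omega)
        rw [← h3]
        exact congrArg x (by ring)
    · exact hT i h
  refine ⟨part1, (List.range r).map (fun k : ℕ => x (k : ℤ)), (n * ℓ : ℚ) / (r : ℚ),
    by simp, ?_, ?_, rfl⟩
  · -- x i = x (i % r) for i < n*ℓ, then evaluate the list
    have key : ∀ i : ℕ, i < n * ℓ → x (i : ℤ) = x ((i % r : ℕ) : ℤ) := by
      intro i
      induction i using Nat.strong_induction_on with
      | _ i ih =>
        intro hi
        by_cases hir : i < r
        · rw [Nat.mod_eq_of_lt hir]
        · have hstep : x (((i - r : ℕ) : ℤ) + (r : ℤ)) = x ((i - r : ℕ) : ℤ) :=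
            part1 _ (by positivity) (by omega)
          have hcast : ((i : ℕ) : ℤ) = ((i - r : ℕ) : ℤ) + (r : ℤ) := by omega
          have hmod : (i - r) % r = i % r := by
            conv_rhs => rw [show i = (i - r) + r from by omega]
            rw [Nat.add_mod_right]
          rw [hcast, hstep, ih (i - r) (by omega) (by omega), hmod]
    intro i hi
    rw [key i hi]
    have hlt : i % r < r := Nat.mod_lt _ (by omega)
    rw [List.getD_eq_getElem?_getD]
    simp [List.getElem?_map, List.getElem?_range, hlt]
  · rw [lt_div_iff₀ (by positivity)]
    have h1 : (r : ℚ) < (ℓ : ℚ) := by exact_mod_cast hℓr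
    have hn0 : (0 : ℚ) < n := by positivity
    nlinarith
end

section
/- Let x = ρ̄^∞(1) be the fixed point of the substitution ρ̄ : k ↦ 1·0·0·0·(pk) on ℕ₀ (so ρ̄ has constant length 5 and x starts with ρ̄ⁿ(1) for all n). Define g(n) = Σ_{j=1}^{n} (−1)^{j+1} x_j. Then for every k ≥ 0 and every n with 5^k ≤ n ≤ 5^{k+1} − 1, one has p^k ≤ g(n) ≤ g(5^k) = Σ_{m=0}^{k} p^m. -/
/-!
Since `ρ̄` has constant length 5, the letters of `x` satisfy `x (5j) = 1`, `x (5j+1) = x (5j+2) =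
x (5j+3) = 0` and `x (5j+4) = p · x j`. Summing the alternating signs over a block of five letters
gives `g (5n) = p · g n + (n mod 2)`, and every `g (5n + r)`, `r < 5`, lies between `p · g n` and
`p · g n + 1`. Induction on `k`, writing `n ∈ [5^{k+1}, 5^{k+2})` as `5j + r` with
`j ∈ [5^k, 5^{k+1})`, gives both bounds, and `g (5^{k+1}) = p · g (5^k) + 1` because `5^k` is odd.
-/

open Finset

section ConstantLength

variable {σ : ℕ → List ℕ} {L : ℕ}

theorem length_applyN (hσ : ∀ k, (σ k).length = L) (w : List ℕ) :
    (applyN σ w).length = L * w.length := by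
  induction w with
  | nil => simp [applyN]
  | cons a w ih =>
    simp only [applyN, List.flatMap_cons, List.length_append, List.length_cons] at ih ⊢
    rw [ih, hσ]
    ring

theorem length_iterate_applyN (hσ : ∀ k, (σ k).length = L) (n a : ℕ) :
    ((applyN σ)^[n] [a]).length = L ^ n := by
  induction n with
  | zero => simp
  | succ n ih => rw [Function.iterate_succ_apply', length_applyN hσ, ih, pow_succ']

theorem getD_applyN (hσ : ∀ k, (σ k).length = L) {w : List ℕ} {j i : ℕ}
    (hj : j < w.length) (hi : i < L) :
    (applyN σ w).getD (L * j + i) 0 = (σ (w.getD j 0)).getD i 0 := by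
  induction w generalizing j with
  | nil => simp at hj
  | cons a w ih =>
    rw [applyN, List.flatMap_cons]
    cases j with
    | zero => simpa using List.getD_append _ _ 0 _ (hσ a ▸ hi)
    | succ j =>
      have hidx : L * (j + 1) + i = (σ a).length + (L * j + i) := by rw [hσ]; ring
      rw [hidx, List.getD_append_right _ _ _ _ (by omega), Nat.add_sub_cancel_left]
      exact ih (by simpa using hj)

theorem fixedPoint_apply_mul_add (hσ : ∀ k, (σ k).length = L) (hL : 1 < L) {x : ℕ → ℕ}
    {a : ℕ} (hx : ∀ n j, j < L ^ n → x j = ((applyN σ)^[n] [a]).getD j 0) (j : ℕ) {i : ℕ}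
    (hi : i < L) : x (L * j + i) = (σ (x j)).getD i 0 := by
  have hj : j < L ^ j := Nat.lt_pow_self hL
  have hji : L * j + i < L ^ (j + 1) :=
    calc L * j + i < L * (j + 1) := by rw [mul_add, mul_one]; omega
      _ ≤ L * L ^ j := Nat.mul_le_mul_left _ hj
      _ = L ^ (j + 1) := (pow_succ' L j).symm
  rw [hx (j + 1) _ hji, Function.iterate_succ_apply',
    getD_applyN hσ (by rwa [length_iterate_applyN hσ]) hi, ← hx j j hj]

end ConstantLength

def altSum (x : ℕ → ℕ) (n : ℕ) : ℤ := ∑ j ∈ range n, (-1) ^ j * (x j : ℤ)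

def RhoBarRecursion (p : ℕ) (x : ℕ → ℕ) : Prop :=
  ∀ j, ∀ i < 5, x (5 * j + i) = [1, 0, 0, 0, p * x j].getD i 0

section AlternatingSum

variable {p : ℕ} {x : ℕ → ℕ}

theorem altSum_zero : altSum x 0 = 0 := rfl

theorem altSum_succ (n : ℕ) : altSum x (n + 1) = altSum x n + (-1) ^ n * x n :=
  sum_range_succ _ _

theorem neg_one_pow_five_mul (j : ℕ) : (-1 : ℤ) ^ (5 * j) = (-1) ^ j := by
  rw [pow_mul]
  norm_num

theorem altSum_five_mul_add_succ (hx : RhoBarRecursion p x) (j : ℕ) {r : ℕ} (hr : r ≤ 3) :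
    altSum x (5 * j + (r + 1)) = altSum x (5 * j) + (-1) ^ j := by
  induction r with
  | zero =>
    have hfirst : x (5 * j) = 1 := by simpa using hx j 0 (by norm_num)
    simp [altSum_succ, hfirst, neg_one_pow_five_mul]
  | succ r ih =>
    have hzero : x (5 * j + (r + 1)) = 0 := by
      rw [hx j _ (by omega)]
      obtain rfl | rfl | rfl : r = 0 ∨ r = 1 ∨ r = 2 := by omega
      all_goals rfl
    rw [← add_assoc, altSum_succ, hzero, ih (by omega)]
    simp

theorem altSum_five_mul_succ (hx : RhoBarRecursion p x) (j : ℕ) :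
    altSum x (5 * (j + 1)) = altSum x (5 * j) + (-1) ^ j * (1 + p * x j) := by
  have hsign : (-1 : ℤ) ^ (5 * j + 4) = (-1) ^ j := by
    rw [pow_add, neg_one_pow_five_mul]
    norm_num
  rw [show 5 * (j + 1) = 5 * j + 4 + 1 by ring, altSum_succ,
    altSum_five_mul_add_succ hx j (le_refl 3), hx j 4 (by norm_num), hsign]
  simp only [List.getD_cons_succ, List.getD_cons_zero]
  push_cast
  ring

theorem altSum_five_mul (hx : RhoBarRecursion p x) (n : ℕ) :
    altSum x (5 * n) = p * altSum x n + (n % 2 : ℕ) := by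
  induction n with
  | zero => simp [altSum_zero]
  | succ n ih =>
    rw [altSum_five_mul_succ hx, ih, altSum_succ]
    rcases Nat.even_or_odd n with h | h
    · rw [h.neg_one_pow, Nat.even_iff.1 h, Nat.succ_mod_two_eq_one_iff.2 (Nat.even_iff.1 h)]
      push_cast
      ring
    · rw [h.neg_one_pow, Nat.odd_iff.1 h, Nat.succ_mod_two_eq_zero_iff.2 (Nat.odd_iff.1 h)]
      push_cast
      ring

theorem altSum_five_mul_add_mem (hx : RhoBarRecursion p x) (j : ℕ) {r : ℕ} (hr : r < 5) :
    p * altSum x j ≤ altSum x (5 * j + r) ∧ altSum x (5 * j + r) ≤ p * altSum x j + 1 := by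
  have hmod : j % 2 < 2 := Nat.mod_lt _ two_pos
  rcases r with _ | r
  · rw [add_zero, altSum_five_mul hx]
    constructor <;> push_cast <;> omega
  · rw [altSum_five_mul_add_succ hx j (by omega), altSum_five_mul hx]
    rcases Nat.even_or_odd j with h | h
    · rw [h.neg_one_pow, Nat.even_iff.1 h]
      constructor <;> push_cast <;> linarith
    · rw [h.neg_one_pow, Nat.odd_iff.1 h]
      constructor <;> push_cast <;> linarith

theorem altSum_five_pow_succ (hx : RhoBarRecursion p x) (k : ℕ) :
    altSum x (5 ^ (k + 1)) = p * altSum x (5 ^ k) + 1 := by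
  have hodd : 5 ^ k % 2 = 1 := by rw [Nat.pow_mod]; norm_num
  rw [pow_succ', altSum_five_mul hx, hodd, Nat.cast_one]

theorem altSum_pow_five (hx : RhoBarRecursion p x) (k : ℕ) :
    altSum x (5 ^ k) = ∑ m ∈ range (k + 1), (p : ℤ) ^ m := by
  induction k with
  | zero => simpa [altSum_zero] using altSum_five_mul_add_succ hx 0 (Nat.zero_le 3)
  | succ k ih => rw [altSum_five_pow_succ hx, ih, ← geom_sum_succ]

theorem pow_le_altSum_le_altSum_pow_five (hx : RhoBarRecursion p x) (k : ℕ) {n : ℕ}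
    (hlow : 5 ^ k ≤ n) (hhigh : n < 5 ^ (k + 1)) :
    (p : ℤ) ^ k ≤ altSum x n ∧ altSum x n ≤ altSum x (5 ^ k) := by
  induction k generalizing n with
  | zero =>
    have hone : ∀ r ≤ 3, altSum x (r + 1) = 1 := fun r hr => by
      simpa [altSum_zero] using altSum_five_mul_add_succ hx 0 hr
    obtain ⟨r, hr, rfl⟩ : ∃ r ≤ 3, n = r + 1 := ⟨n - 1, by omega, by omega⟩
    rw [pow_zero, pow_zero, hone r hr]
    exact ⟨le_rfl, (hone 0 (Nat.zero_le 3)).ge⟩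
  | succ k ih =>
    obtain ⟨j, r, hr, rfl⟩ : ∃ j r, r < 5 ∧ n = 5 * j + r :=
      ⟨n / 5, n % 5, Nat.mod_lt _ (by norm_num), (Nat.div_add_mod n 5).symm⟩
    have hj : 5 ^ k ≤ j ∧ j < 5 ^ (k + 1) := by
      rw [pow_succ'] at hlow hhigh ⊢
      rw [pow_succ'] at hhigh
      omega
    obtain ⟨ihlow, ihhigh⟩ := ih hj.1 hj.2
    obtain ⟨hblock_low, hblock_high⟩ := altSum_five_mul_add_mem hx j hr
    have hp : (0 : ℤ) ≤ p := Nat.cast_nonneg p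
    constructor
    · calc (p : ℤ) ^ (k + 1) = p * p ^ k := pow_succ' _ _
        _ ≤ p * altSum x j := mul_le_mul_of_nonneg_left ihlow hp
        _ ≤ altSum x (5 * j + r) := hblock_low
    · calc altSum x (5 * j + r) ≤ p * altSum x j + 1 := hblock_high
        _ ≤ p * altSum x (5 ^ k) + 1 := by gcongr
        _ = altSum x (5 ^ (k + 1)) := (altSum_five_pow_succ hx k).symm

end AlternatingSum

theorem stmt13_general (p : ℕ)
    (ρbar : ℕ → List ℕ) (hρbar : ∀ k, ρbar k = [1, 0, 0, 0, p * k])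
    (x : ℕ → ℕ)
    (hx : ∀ (n j : ℕ), j < 5 ^ n → x j = ((applyN ρbar)^[n] [1]).getD j 0)
    (g : ℕ → ℤ)
    (hg : ∀ n, g n = ∑ j ∈ Finset.range n, (-1 : ℤ) ^ j * (x j : ℤ)) :
    ∀ k n : ℕ, 5 ^ k ≤ n → n ≤ 5 ^ (k + 1) - 1 →
      (p : ℤ) ^ k ≤ g n ∧ g n ≤ g (5 ^ k) ∧
      g (5 ^ k) = ∑ m ∈ Finset.range (k + 1), (p : ℤ) ^ m := by
  have hblock : RhoBarRecursion p x := by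
    intro j i hi
    rw [← hρbar]
    exact fixedPoint_apply_mul_add (fun k => by simp [hρbar]) (by norm_num) hx j hi
  obtain rfl : g = altSum x := funext hg
  intro k n hlow hhigh
  have hhigh' : n < 5 ^ (k + 1) := by have := Nat.one_le_pow (k + 1) 5 (by norm_num); omega
  obtain ⟨hpow_le, hle_pow_five⟩ := pow_le_altSum_le_altSum_pow_five hblock k hlow hhigh'
  exact ⟨hpow_le, hle_pow_five, altSum_pow_five hblock k⟩

/-- Alternating sum bounds for the fixed point of ρ̄ : k ↦ 1 0 0 0 (pk).
Here `x j` is the (j+1)-st letter of the fixed point (0-indexed), so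
`g n = Σ_{j=1}^{n} (−1)^{j+1} x_j` in the 1-indexed notation. -/
theorem stmt13 (p : ℕ) (hp : 2 ≤ p)
    (ρbar : ℕ → List ℕ) (hρbar : ∀ k, ρbar k = [1, 0, 0, 0, p * k])
    (x : ℕ → ℕ)
    (hx : ∀ (n j : ℕ), j < 5 ^ n → x j = ((applyN ρbar)^[n] [1]).getD j 0)
    (g : ℕ → ℤ)
    (hg : ∀ n, g n = ∑ j ∈ Finset.range n, (-1 : ℤ) ^ j * (x j : ℤ)) :
    ∀ k n : ℕ, 5 ^ k ≤ n → n ≤ 5 ^ (k + 1) - 1 →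
      (p : ℤ) ^ k ≤ g n ∧ g n ≤ g (5 ^ k) ∧
      g (5 ^ k) = ∑ m ∈ Finset.range (k + 1), (p : ℤ) ^ m :=
  stmt13_general p ρbar hρbar x hx g hg
end

section
/- For the return word substitution ρ̄ : j ↦ 0 (j+1) on ℕ₀ (the Infini-bonacci substitution) and each n ≥ 1, the word ρ̄ⁿ(0) has length 2ⁿ, and for 1 ≤ i ≤ 2ⁿ its letter at position i (1-indexed) is (ρ̄ⁿ(0))_i = ν, where 2^ν is the largest power of 2 dividing i, except (ρ̄ⁿ(0))_{2ⁿ} = n. Equivalently, every second letter of ρ̄ⁿ(0) is 0, every fourth letter (among the remaining) is 1, etc. -/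
lemma val_odd (m : ℕ) : padicValNat 2 (2 * m + 1) = 0 :=
  padicValNat.eq_zero_of_not_dvd (by omega)

lemma val_even (m : ℕ) : padicValNat 2 (2 * (m + 1)) = padicValNat 2 (m + 1) + 1 := by
  rw [padicValNat.mul (by norm_num) (by omega), padicValNat.self (by norm_num)]
  omega

lemma range_double (m : ℕ) :
    (List.range (2 * m)).map (fun k => padicValNat 2 (k + 1)) =
      (List.range m).flatMap (fun k => [0, padicValNat 2 (k + 1) + 1]) := by
  induction m with
  | zero => simp
  | succ m ih =>
      have h2 : 2 * (m + 1) = (2 * m + 1) + 1 := by ring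
      rw [h2, List.range_succ, List.range_succ, List.range_succ,
        List.map_append, List.map_append, List.flatMap_append, ← ih]
      simp only [List.map_cons, List.map_nil, List.flatMap_cons, List.flatMap_nil,
        List.append_assoc, List.append_nil]
      congr 1
      simp [val_odd m, show 2 * m + 1 + 1 = 2 * (m + 1) by ring, val_even m]

lemma iter_eq (ρbar : ℕ → List ℕ) (hρbar : ∀ j, ρbar j = [0, j + 1]) (n : ℕ) :
    (applyN ρbar)^[n] [0] = (List.range (2 ^ n)).map (fun k => padicValNat 2 (k + 1)) := by
  induction n with
  | zero =>
      show [0] = List.map _ [0]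
      simp [padicValNat.one]
  | succ n ih =>
      rw [Function.iterate_succ_apply', ih, applyN, pow_succ, mul_comm, range_double,
        List.flatMap_map]
      congr 1
      funext k
      simp [hρbar]

/-- For the Infini-bonacci substitution ρ̄ : j ↦ 0 (j+1), the word ρ̄ⁿ(0) has
length 2ⁿ; its i-th letter (1-indexed, i < 2ⁿ) is the 2-adic valuation of i,
and its last letter is n. -/
theorem stmt14 (ρbar : ℕ → List ℕ) (hρbar : ∀ j, ρbar j = [0, j + 1]) :
    ∀ n : ℕ, 1 ≤ n →
      ((applyN ρbar)^[n] [0]).length = 2 ^ n ∧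
      (∀ i : ℕ, 1 ≤ i → i < 2 ^ n →
        ((applyN ρbar)^[n] [0]).getD (i - 1) 0 = padicValNat 2 i) ∧
      ((applyN ρbar)^[n] [0]).getD (2 ^ n - 1) 0 = n := by
  intro n hn
  rw [iter_eq ρbar hρbar]
  have hlen : ((List.range (2 ^ n)).map (fun k => padicValNat 2 (k + 1))).length = 2 ^ n := by
    simp
  have key : ∀ i : ℕ, 1 ≤ i → i ≤ 2 ^ n →
      ((List.range (2 ^ n)).map (fun k => padicValNat 2 (k + 1))).getD (i - 1) 0 =
        padicValNat 2 i := by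
    intro i h1 h2
    have hlt : i - 1 < 2 ^ n := by omega
    rw [List.getD_eq_getElem _ _ (by simpa using hlt)]
    simp only [List.getElem_map, List.getElem_range]
    congr 1
    omega
  refine ⟨hlen, fun i h1 h2 => key i h1 h2.le, ?_⟩
  have h1 : 1 ≤ 2 ^ n := Nat.one_le_two_pow
  rw [key (2 ^ n) h1 le_rfl, padicValNat.prime_pow]
end

section
/- Fix p ≥ 1, r ≥ 2, k₁,…,k_r ∈ ℕ₀ and define f(k) = k_r + pk and ρ̄(k) = k₁⋯k_{r−1} f(k). For any sequence (p_n) with 0 ≤ p_n ≤ r−1, define q_n = −1 − Σ_{m=1}^{n} p_m r^{m−1}. Then for the n-th Toeplitz approximant x⁽ⁿ⁾ = α⁽¹⁾ ▶ ⋯ ▶ α⁽ⁿ⁾ with α⁽ᵐ⁾ = S^{p_m}((f^{m−1}(k₁⋯k_{r−1}) ?)^ℤ), the approximant x⁽ⁿ⁾ is rⁿ-periodic and its set of undetermined positions equals rⁿℤ + q_n. -/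
/-!
If the holes of a `T`-periodic word form the class `c + Tℤ` with `-T ≤ c < 0`, the `k`-th hole
is `c + T(k + 1)`. Filling it with an `R`-periodic word whose holes are `d + Rℤ` therefore gives
a `TR`-periodic word whose holes are `c + T(d + 1) + TRℤ`. The word `α⁽ᵐ⁾` has period `r` and
holes `-1 - pₘ + rℤ`, so induction on `n` gives period `rⁿ` and holes `q_n + rⁿℤ`, where
`-rⁿ ≤ q_n < 0` because `Σ pₘ r^{m-1} ≤ rⁿ - 1`.
-/

/-- `z` is the result of filling the undetermined positions (value `none`) of `x`
with the letters of `y` in order: `e` enumerates the undetermined positions of `x`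
in increasing order, with `e 0` the first undetermined position ≥ 0. -/
def IsFilling (x y z : ℤ → Option ℕ) : Prop :=
  ∃ e : ℤ → ℤ, StrictMono e ∧ (∀ i, x i = none ↔ ∃ k, e k = i) ∧
    0 ≤ e 0 ∧ e (-1) < 0 ∧
    (∀ k, z (e k) = y k) ∧ (∀ i, x i ≠ none → z i = x i)

open Function

theorem Int.emod_eq_sub_one_iff_dvd_add_one {a r : ℤ} (hr : 0 < r) :
    a % r = r - 1 ↔ r ∣ a + 1 := by
  constructor
  · intro h
    exact ⟨a / r + 1, by linarith [Int.mul_ediv_add_emod a r]⟩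
  · rintro ⟨d, hd⟩
    rw [show a = r - 1 + r * (d - 1) by linarith, Int.add_mul_emod_self_left]
    exact Int.emod_eq_of_lt (by linarith) (by linarith)

theorem periodic_and_eq_none_iff_of_emod {β : Type*} {w : ℤ → Option β} {F : ℤ → β} {r s : ℤ}
    (hr : 0 < r)
    (hw : ∀ i, w i = if (i + s) % r = r - 1 then none else some (F ((i + s) % r))) :
    Periodic w r ∧ ∀ i, w i = none ↔ r ∣ i - (-1 - s) := by
  refine ⟨fun i => by rw [hw, hw, add_right_comm, Int.add_emod_right], fun i => ?_⟩
  rw [hw, show i - (-1 - s) = i + s + 1 by ring, ← Int.emod_eq_sub_one_iff_dvd_add_one hr]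
  split_ifs with h <;> simp [h]

theorem sum_mul_pow_le_pow_sub_one {a : ℕ → ℤ} {r : ℤ} (ha₀ : ∀ j, 0 ≤ a j)
    (ha : ∀ j, a j ≤ r - 1) (n : ℕ) : ∑ j ∈ Finset.range n, a j * r ^ j ≤ r ^ n - 1 := by
  have hr : 0 ≤ r := by linarith [ha₀ 0, ha 0]
  calc ∑ j ∈ Finset.range n, a j * r ^ j ≤ ∑ j ∈ Finset.range n, (r - 1) * r ^ j :=
        Finset.sum_le_sum fun j _ => mul_le_mul_of_nonneg_right (ha j) (pow_nonneg hr j)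
    _ = r ^ n - 1 := by rw [← Finset.mul_sum, mul_comm, geom_sum_mul]

theorem StrictMono.apply_eq_add_mul {e : ℤ → ℤ} (he : StrictMono e) {T c : ℤ} (hT : 0 < T)
    (hrange : ∀ i, (∃ k, e k = i) ↔ T ∣ i - c) (k : ℤ) : e k = e 0 + T * k := by
  have hdvd : ∀ k, T ∣ e k - c := fun k => (hrange _).1 ⟨k, rfl⟩
  have hstep : ∀ k, e (k + 1) = e k + T := by
    intro k
    obtain ⟨j, hj⟩ := (hrange (e k + T)).2 (by simpa [add_sub_right_comm] using hdvd k)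
    have hkj : k < j := he.lt_iff_lt.1 (by omega)
    have hle : e (k + 1) ≤ e j := he.monotone (by omega)
    have hge : T ≤ e (k + 1) - e k :=
      Int.le_of_dvd (by linarith [he (lt_add_one k)])
        (by simpa using dvd_sub (hdvd (k + 1)) (hdvd k))
    omega
  induction k using Int.induction_on with
  | zero => simp
  | succ m ih => rw [hstep, ih]; ring
  | pred m ih =>
    have := hstep (-(m : ℤ) - 1)
    rw [sub_add_cancel] at this
    linarith

theorem Int.eq_add_of_dvd_sub {T c a : ℤ} (hc : -T ≤ c) (hc' : c < 0) (ha : 0 ≤ a)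
    (ha' : a - T < 0) (h : T ∣ a - c) : a = c + T := by
  obtain ⟨m, hm⟩ := h
  have hm₀ : 0 < m := by nlinarith
  have hm₂ : m < 2 := by nlinarith
  obtain rfl : m = 1 := by omega
  linarith

section Filling

variable {x y z : ℤ → Option ℕ} {T c : ℤ}

theorem IsFilling.apply_add_mul (h : IsFilling x y z) (hc : -T ≤ c) (hc' : c < 0)
    (hx : ∀ i, x i = none ↔ T ∣ i - c) (k : ℤ) : z (c + T * (k + 1)) = y k := by
  obtain ⟨e, he, he_holes, he₀, he₁, hfill, -⟩ := h
  have hrange : ∀ i, (∃ k, e k = i) ↔ T ∣ i - c := fun i => (he_holes i).symm.trans (hx i)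
  have hform := he.apply_eq_add_mul (by linarith) hrange
  have he₀' : e 0 = c + T :=
    Int.eq_add_of_dvd_sub hc hc' he₀ (by linarith [hform (-1)]) ((hrange _).1 ⟨0, rfl⟩)
  rw [← hfill k, hform, he₀']
  ring_nf

theorem IsFilling.periodic_and_eq_none_iff {R d : ℤ} (h : IsFilling x y z)
    (hc : -T ≤ c) (hc' : c < 0) (hxT : Periodic x T) (hx : ∀ i, x i = none ↔ T ∣ i - c)
    (hyR : Periodic y R) (hy : ∀ k, y k = none ↔ R ∣ k - d) :
    Periodic z (T * R) ∧ ∀ i, z i = none ↔ T * R ∣ i - (c + T * (d + 1)) := by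
  have hT : T ≠ 0 := by omega
  have hkeep : ∀ i, ¬ T ∣ i - c → z i = x i := by
    obtain ⟨e, -, -, -, -, -, hkeep⟩ := h
    exact fun i hi => hkeep i (mt (hx i).1 hi)
  have hfill := h.apply_add_mul hc hc' hx
  have hdvd_shift : ∀ i, T ∣ i + T * R - c ↔ T ∣ i - c := fun i => by
    rw [add_sub_right_comm]; exact dvd_add_left (dvd_mul_right T R)
  constructor
  · intro i
    by_cases hi : T ∣ i - c
    · obtain ⟨m, hm⟩ := hi
      obtain rfl : i = c + T * (m - 1 + 1) := by linarith
      rw [show c + T * (m - 1 + 1) + T * R = c + T * (m - 1 + R + 1) by ring, hfill, hfill,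
        hyR (m - 1)]
    · rw [hkeep _ hi, hkeep _ (mt (hdvd_shift i).1 hi), mul_comm]
      exact hxT.int_mul R i
  · intro i
    by_cases hi : T ∣ i - c
    · obtain ⟨m, hm⟩ := hi
      obtain rfl : i = c + T * (m - 1 + 1) := by linarith
      rw [hfill, hy, show c + T * (m - 1 + 1) - (c + T * (d + 1)) = T * (m - 1 - d) by ring,
        mul_dvd_mul_iff_left hT]
    · refine iff_of_false (by rw [hkeep _ hi]; exact mt (hx i).1 hi) fun hd => hi ?_
      have := dvd_add (dvd_of_mul_right_dvd hd) (dvd_mul_right T (d + 1))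
      rwa [show i - (c + T * (d + 1)) + T * (d + 1) = i - c by ring] at this

end Filling

theorem stmt18_general (r : ℕ) (hr : 2 ≤ r)
    (ks : List ℕ)
    (f : ℕ → ℕ)
    (pseq : ℕ → ℕ) (hpseq : ∀ m, pseq m ≤ r - 1)
    (α : ℕ → ℤ → Option ℕ)
    (hα : ∀ (m : ℕ) (i : ℤ), 1 ≤ m →
      α m i = if (i + (pseq m : ℤ)) % (r : ℤ) = (r : ℤ) - 1 then none
        else some (f^[m - 1] (ks.getD ((i + (pseq m : ℤ)) % (r : ℤ)).toNat 0)))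
    (q : ℕ → ℤ)
    (hq : ∀ n, q n = -1 - ∑ j ∈ Finset.range n, (pseq (j + 1) : ℤ) * (r : ℤ) ^ j)
    (x : ℕ → ℤ → Option ℕ)
    (hx1 : x 1 = α 1)
    (hxs : ∀ m, 1 ≤ m → IsFilling (x m) (α (m + 1)) (x (m + 1))) :
    ∀ n, 1 ≤ n →
      (∀ i : ℤ, x n (i + (r : ℤ) ^ n) = x n i) ∧
      (∀ i : ℤ, x n i = none ↔ (r : ℤ) ^ n ∣ (i - q n)) := by
  have hα_holes : ∀ m, 1 ≤ m →
      Periodic (α m) r ∧ ∀ i, α m i = none ↔ (r : ℤ) ∣ i - (-1 - pseq m) := fun m hm =>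
    periodic_and_eq_none_iff_of_emod (F := fun j => f^[m - 1] (ks.getD j.toNat 0))
      (by omega) (hα m · hm)
  have hq_bounds : ∀ n, -(r : ℤ) ^ n ≤ q n ∧ q n < 0 := fun n => by
    have := sum_mul_pow_le_pow_sub_one (a := fun j => (pseq (j + 1) : ℤ)) (r := r)
      (fun _ => by positivity) (fun j => by have := hpseq (j + 1); omega) n
    have := Finset.sum_nonneg fun j (_ : j ∈ Finset.range n) =>
      (by positivity : (0 : ℤ) ≤ pseq (j + 1) * (r : ℤ) ^ j)
    constructor <;> linarith [hq n]
  intro n hn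
  induction n, hn using Nat.le_induction with
  | base => simpa [hx1, hq 1] using hα_holes 1 le_rfl
  | succ n hn ih =>
    obtain ⟨hαP, hαN⟩ := hα_holes (n + 1) (by omega)
    have hq_succ : q n + (r : ℤ) ^ n * (-1 - pseq (n + 1) + 1) = q (n + 1) := by
      rw [hq, hq, Finset.sum_range_succ]; ring
    have := (hxs n hn).periodic_and_eq_none_iff (hq_bounds n).1 (hq_bounds n).2 ih.1 ih.2 hαP hαN
    rwa [← pow_succ, hq_succ] at this

/-- The n-th Toeplitz approximant x⁽ⁿ⁾ = α⁽¹⁾ ▶ ⋯ ▶ α⁽ⁿ⁾, where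
α⁽ᵐ⁾ = S^{p_m}((f^{m−1}(k₁⋯k_{r−1}) ?)^ℤ), is rⁿ-periodic and its set of
undetermined positions is rⁿℤ + q_n with q_n = −1 − Σ_{m=1}^{n} p_m r^{m−1}. -/
theorem stmt18 (p r : ℕ) (hr : 2 ≤ r)
    (ks : List ℕ) (hks : ks.length = r - 1)
    (kr : ℕ) (f : ℕ → ℕ) (hf : ∀ k, f k = kr + p * k)
    (pseq : ℕ → ℕ) (hpseq : ∀ m, pseq m ≤ r - 1)
    (α : ℕ → ℤ → Option ℕ)
    (hα : ∀ (m : ℕ) (i : ℤ), 1 ≤ m →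
      α m i = if (i + (pseq m : ℤ)) % (r : ℤ) = (r : ℤ) - 1 then none
        else some (f^[m - 1] (ks.getD ((i + (pseq m : ℤ)) % (r : ℤ)).toNat 0)))
    (q : ℕ → ℤ)
    (hq : ∀ n, q n = -1 - ∑ j ∈ Finset.range n, (pseq (j + 1) : ℤ) * (r : ℤ) ^ j)
    (x : ℕ → ℤ → Option ℕ)
    (hx1 : x 1 = α 1)
    (hxs : ∀ m, 1 ≤ m → IsFilling (x m) (α (m + 1)) (x (m + 1))) :
    ∀ n, 1 ≤ n →
      (∀ i : ℤ, x n (i + (r : ℤ) ^ n) = x n i) ∧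
      (∀ i : ℤ, x n i = none ↔ (r : ℤ) ^ n ∣ (i - q n)) :=
  stmt18_general r hr ks f pseq hpseq α hα q hq x hx1 hxs
end
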